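/- arXiv:1604.00920 — 4 statements merged into one kernel-verified Lean document; each statement's English description precedes it below -/
import Mathlib

section
/- Let K be a field, let α, m be positive natural numbers, and let u ∈ K with u ≠ 0 and u ≠ 1. Set x = (u-1)/u^(α*m) and z = ((u^m - 1)/(u-1)) * u^(α*m). Then x*z + 1 = u^m, and consequently 1^(2α+1) + x*(x*z + 1^2)^α = u. In other words, the polynomial F(X,Y,Z) = Y^(2α+1) + X*(X*Z + Y^2)^α satisfies F(x, 1, z) = u. -/
section BicuspidalPoint

variable {K : Type*} [Field K] {u : K}

theorem sub_one_div_pow_mul_geom_mul_pow_add_one (hu0 : u ≠ 0) (hu1 : u ≠ 1) (k m : ℕ) :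
    (u - 1) / u ^ k * ((u ^ m - 1) / (u - 1) * u ^ k) + 1 = u ^ m := by
  have hu1' : u - 1 ≠ 0 := sub_ne_zero.mpr hu1
  field_simp
  ring

theorem div_pow_mul_mul_pow_pow_eq (hu0 : u ≠ 0) (a : K) (α m : ℕ) :
    a / u ^ (α * m) * (u ^ m) ^ α = a := by
  rw [← pow_mul, mul_comm m α, div_mul_cancel₀ a (pow_ne_zero _ hu0)]

end BicuspidalPoint

theorem bicuspidal_point_eval_general (K : Type*) [Field K] (α m : ℕ)
    (u : K) (hu0 : u ≠ 0) (hu1 : u ≠ 1)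
    (x z : K)
    (hx : x = (u - 1) / u ^ (α * m))
    (hz : z = ((u ^ m - 1) / (u - 1)) * u ^ (α * m)) :
    x * z + 1 = u ^ m ∧ 1 ^ (2 * α + 1) + x * (x * z + 1 ^ 2) ^ α = u := by
  have hxz : x * z + 1 = u ^ m := by
    rw [hx, hz]
    exact sub_one_div_pow_mul_geom_mul_pow_add_one hu0 hu1 _ _
  refine ⟨hxz, ?_⟩
  rw [one_pow, one_pow, hxz, hx, div_pow_mul_mul_pow_pow_eq hu0]
  exact add_sub_cancel 1 u

theorem bicuspidal_point_eval (K : Type*) [Field K] (α m : ℕ) (hα : 0 < α) (hm : 0 < m)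
    (u : K) (hu0 : u ≠ 0) (hu1 : u ≠ 1)
    (x z : K)
    (hx : x = (u - 1) / u ^ (α * m))
    (hz : z = ((u ^ m - 1) / (u - 1)) * u ^ (α * m)) :
    x * z + 1 = u ^ m ∧ 1 ^ (2 * α + 1) + x * (x * z + 1 ^ 2) ^ α = u :=
  bicuspidal_point_eval_general K α m u hu0 hu1 x z hx hz
end

section
/- Let K be a field, b a positive natural number, a ∈ K, and let u, t ∈ K with u ≠ 1 and t ≠ 0. Set x = (u-1)/t^b and z = t^b * (t^(b+1) - t^b - a*(u-1)) / (u-1)^2. Then x^2 * z + a*x + 1 = t, and consequently 1^(3b+1) + x*(x^2*z + a*x*1^2 + 1^3)^b = u. In other words, the polynomial F(X,Y,Z) = Y^(3b+1) + X*(X^2*Z + a*X*Y^2 + Y^3)^b satisfies F(x, 1, z) = u. -/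
/-! The coordinate `z` is chosen exactly so that the inner form `X²Z + aXY² + Y³` takes the value `t`
at `(x, 1, z)`; then `F(x, 1, z) = 1 + x tᵇ = u` because `x = (u - 1) / tᵇ`. -/

lemma sq_mul_add_mul_add_one_eq {K : Type*} [Field K] {a u t : K} (hu : u ≠ 1) (ht : t ≠ 0)
    (b : ℕ) :
    ((u - 1) / t ^ b) ^ 2 * (t ^ b * (t ^ (b + 1) - t ^ b - a * (u - 1)) / (u - 1) ^ 2)
      + a * ((u - 1) / t ^ b) + 1 = t := by
  have hu' : u - 1 ≠ 0 := sub_ne_zero.mpr hu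
  field_simp
  ring

theorem bicuspidal_point_eval2_general (K : Type*) [Field K] (b : ℕ) (a : K)
    (u t : K) (hu1 : u ≠ 1) (ht : t ≠ 0)
    (x z : K)
    (hx : x = (u - 1) / t ^ b)
    (hz : z = t ^ b * (t ^ (b + 1) - t ^ b - a * (u - 1)) / (u - 1) ^ 2) :
    x ^ 2 * z + a * x + 1 = t ∧
      1 ^ (3 * b + 1) + x * (x ^ 2 * z + a * x * 1 ^ 2 + 1 ^ 3) ^ b = u := by
  have hform : x ^ 2 * z + a * x + 1 = t := hx ▸ hz ▸ sq_mul_add_mul_add_one_eq hu1 ht b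
  refine ⟨hform, ?_⟩
  simp only [one_pow, mul_one, hform]
  rw [hx, div_mul_cancel₀ _ (pow_ne_zero b ht)]
  ring

theorem bicuspidal_point_eval2 (K : Type*) [Field K] (b : ℕ) (hb : 0 < b) (a : K)
    (u t : K) (hu1 : u ≠ 1) (ht : t ≠ 0)
    (x z : K)
    (hx : x = (u - 1) / t ^ b)
    (hz : z = t ^ b * (t ^ (b + 1) - t ^ b - a * (u - 1)) / (u - 1) ^ 2) :
    x ^ 2 * z + a * x + 1 = t ∧
      1 ^ (3 * b + 1) + x * (x ^ 2 * z + a * x * 1 ^ 2 + 1 ^ 3) ^ b = u :=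
  bicuspidal_point_eval2_general K b a u t hu1 ht x z hx hz
end

section
/- Let d ≥ 2 be a natural number and let F ∈ ℤ[X,Y] be a nonzero polynomial in two variables. Then the set { n : ℕ | F(3^(d^n), 2^(d^n)) = 0 } is finite. -/
open MvPolynomial Finset Filter Topology

/-!
Writing `F = ∑ cₘ X^a Y^b`, the value `F(3^K, 2^K)` is the exponential sum `∑ cₘ (3^a 2^b)^K`,
whose bases are pairwise distinct by unique factorization. In such a sum the nonzero term with
the largest base dominates for large `K`, so it vanishes for only finitely many `K`, and in
particular for only finitely many `K = d^n`.
-/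

theorem eventually_sum_mul_pow_ne_zero {ι : Type*} {s : Finset ι} {c t : ι → ℝ}
    (ht : Set.InjOn t s) (ht_pos : ∀ i ∈ s, 0 < t i) (hc : ∃ i ∈ s, c i ≠ 0) :
    ∀ᶠ K in atTop, ∑ i ∈ s, c i * t i ^ K ≠ 0 := by
  classical
  set s' := s.filter (c · ≠ 0)
  have hs' : s' ⊆ s := filter_subset _ _
  have hsum : ∀ K, ∑ i ∈ s', c i * t i ^ K = ∑ i ∈ s, c i * t i ^ K := fun K ↦
    sum_filter_of_ne fun i _ h hci ↦ h (by rw [hci, zero_mul])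
  obtain ⟨i₀, hi₀, hmax⟩ := s'.exists_max_image t (by
    obtain ⟨i, hi, hci⟩ := hc
    exact ⟨i, mem_filter.mpr ⟨hi, hci⟩⟩)
  have ht₀ : 0 < t i₀ := ht_pos i₀ (hs' hi₀)
  -- after dividing by `t i₀ ^ K`, only the dominant term survives in the limit
  have hlim : Tendsto (fun K ↦ ∑ i ∈ s', c i * (t i / t i₀) ^ K) atTop (𝓝 (c i₀)) := by
    rw [show c i₀ = ∑ i ∈ s', if i = i₀ then c i else 0 by simp [hi₀]]
    refine tendsto_finsetSum _ fun i hi ↦ ?_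
    split_ifs with h
    · subst h
      simp [div_self ht₀.ne']
    · have hlt : t i < t i₀ :=
        (hmax i hi).lt_of_ne fun h' ↦ h (ht (hs' hi) (hs' hi₀) h')
      simpa using (tendsto_pow_atTop_nhds_zero_of_lt_one
        (div_nonneg (ht_pos i (hs' hi)).le ht₀.le) ((div_lt_one ht₀).mpr hlt)).const_mul (c i)
  filter_upwards [hlim.eventually_ne (mem_filter.mp hi₀).2] with K hK hzero
  refine hK ?_
  simp_rw [div_pow, ← mul_div_assoc, ← sum_div, hsum, hzero, zero_div]

theorem prod_prime_pow_injective {σ : Type*} [Fintype σ] {p : σ → ℕ} (hp : ∀ i, (p i).Prime)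
    (hp_inj : Function.Injective p) :
    Function.Injective fun m : σ →₀ ℕ ↦ ∏ i, p i ^ m i := by
  classical
  have hfac : ∀ (m : σ →₀ ℕ) j, (∏ i, p i ^ m i).factorization (p j) = m j := by
    intro m j
    rw [Nat.factorization_prod fun i _ ↦ pow_ne_zero _ (hp i).ne_zero, Finsupp.finsetSum_apply,
      sum_eq_single j]
    · simp [(hp j).factorization_pow]
    · intro i _ hij
      simp [(hp i).factorization_pow, hp_inj.ne hij]
    · simp
  intro m m' h
  ext j
  rw [← hfac m j, ← hfac m' j]
  exact congrArg (fun n ↦ n.factorization (p j)) h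

theorem eval_pow_eq_sum {σ R : Type*} [Fintype σ] [CommSemiring R] (x : σ → R) (K : ℕ)
    (F : MvPolynomial σ R) :
    eval (fun i ↦ x i ^ K) F = ∑ m ∈ F.support, coeff m F * (∏ i, x i ^ m i) ^ K := by
  simp_rw [eval_eq', ← prod_pow, ← pow_mul, mul_comm K]

theorem finite_setOf_eval_prime_pow_eq_zero {σ : Type*} [Fintype σ] {p : σ → ℕ}
    (hp : ∀ i, (p i).Prime) (hp_inj : Function.Injective p) {F : MvPolynomial σ ℤ} (hF : F ≠ 0) :
    {K : ℕ | eval (fun i ↦ (p i : ℤ) ^ K) F = 0}.Finite := by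
  have hev := eventually_sum_mul_pow_ne_zero (s := F.support)
    (c := fun m ↦ ((coeff m F : ℤ) : ℝ)) (t := fun m ↦ ((∏ i, p i ^ m i : ℕ) : ℝ))
    (Nat.cast_injective.comp (prod_prime_pow_injective hp hp_inj)).injOn
    (fun m _ ↦ Nat.cast_pos.mpr (Finset.prod_pos fun i _ ↦ pow_pos (hp i).pos _))
    (by
      obtain ⟨m, hm⟩ := support_nonempty.mpr hF
      exact ⟨m, hm, Int.cast_ne_zero.mpr (mem_support_iff.mp hm)⟩)
  rw [← Nat.cofinite_eq_atTop, eventually_cofinite] at hev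
  refine hev.subset fun K hK ↦ ?_
  simp only [Set.mem_ofPred_eq, eval_pow_eq_sum, not_not] at hK ⊢
  exact_mod_cast hK

theorem orbit_finite_on_curve (d : ℕ) (hd : 2 ≤ d)
    (F : MvPolynomial (Fin 2) ℤ) (hF : F ≠ 0) :
    {n : ℕ | eval ![(3 : ℤ) ^ (d ^ n), (2 : ℤ) ^ (d ^ n)] F = 0}.Finite := by
  have hpoint : ∀ K : ℕ, ![(3 : ℤ) ^ K, 2 ^ K] = fun i ↦ ((![3, 2] i : ℕ) : ℤ) ^ K := by
    intro K
    ext i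
    fin_cases i <;> rfl
  have hfin : {K : ℕ | eval ![(3 : ℤ) ^ K, 2 ^ K] F = 0}.Finite := by
    simp_rw [hpoint]
    refine finite_setOf_eval_prime_pow_eq_zero (fun i ↦ ?_) ?_ hF
    · fin_cases i <;> norm_num
    · intro i j h
      fin_cases i <;> fin_cases j <;> simp_all
  exact hfin.preimage (Nat.pow_right_injective hd).injOn
end

section
/- Let K be a field, let u ∈ K with u ≠ 1, let b be a positive natural number, a ∈ K, and t ∈ K nonzero such that (u-1)^2 divides t^(b+1) - t^b - a*(u-1) in the sense that w := (t^(b+1) - t^b - a*(u-1))/(u-1)^2 lies in K. Set x = (u-1)/t^b and y = t^b * w. Then x * (x^2 * y + (a*x + 1)*1^2)^b evaluated in the polynomial Z^(1+3b) + X*(X^2*Y + (a*X + Z)*Z^2)^b with Z = 1 gives: 1^(1+3b) + x*(x^2*y + (a*x + 1))^b = u. -/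
/-! With `x = c / s`, the `x ^ 2`-term of the curve equation cancels the `(u - 1) ^ 2` in the
denominator of `w`, so the inner factor `x ^ 2 * y + (a * x + 1)` collapses to `t`; the outer factor
is then `x * t ^ b = u - 1`. -/

lemma div_sq_mul_mul_div_sq_add {K : Type*} [Field K] {c s : K} (hc : c ≠ 0) (hs : s ≠ 0)
    (a t : K) :
    (c / s) ^ 2 * (s * ((t * s - s - a * c) / c ^ 2)) + (a * (c / s) + 1) = t := by
  field_simp
  ring

theorem line_curve_point_eval_general (K : Type*) [Field K] (u : K) (hu : u ≠ 1)
    (b : ℕ) (a t : K) (ht : t ≠ 0)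
    (w x y : K)
    (hw : w = (t ^ (b + 1) - t ^ b - a * (u - 1)) / (u - 1) ^ 2)
    (hx : x = (u - 1) / t ^ b) (hy : y = t ^ b * w) :
    1 ^ (1 + 3 * b) + x * (x ^ 2 * y + (a * x + 1)) ^ b = u := by
  have htb : t ^ b ≠ 0 := pow_ne_zero b ht
  have inner : x ^ 2 * y + (a * x + 1) = t := by
    rw [hx, hy, hw, pow_succ' t b]
    exact div_sq_mul_mul_div_sq_add (sub_ne_zero.mpr hu) htb a t
  rw [inner, hx, div_mul_cancel₀ _ htb, one_pow, add_sub_cancel]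

theorem line_curve_point_eval (K : Type*) [Field K] (u : K) (hu : u ≠ 1)
    (b : ℕ) (hb : 0 < b) (a t : K) (ht : t ≠ 0)
    (w x y : K)
    (hw : w = (t ^ (b + 1) - t ^ b - a * (u - 1)) / (u - 1) ^ 2)
    (hx : x = (u - 1) / t ^ b) (hy : y = t ^ b * w) :
    1 ^ (1 + 3 * b) + x * (x ^ 2 * y + (a * x + 1)) ^ b = u :=
  line_curve_point_eval_general K u hu b a t ht w x y hw hx hy
end
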